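/- arXiv:1410.2107 — 9 statements merged into one kernel-verified Lean document; each statement's English description precedes it below -/
import Mathlib

section
/- Let L be a finite-dimensional Lie algebra and M a maximal subalgebra of L. If M is a c-ideal of L (i.e., there exists an ideal C of L with L = M + C and M ∩ C ⊆ M_L, where M_L is the core of M), then there exists an ideal C of L such that L = M + C, M ∩ C is an ideal of L, and C/(M ∩ C) is a chief factor of L (i.e., there is no ideal K of L with M ∩ C ⊊ K ⊊ C). -/
/-- `M` is a maximal (proper) subalgebra of `L`. -/
def IsMaximalSubalgebra {F : Type*} [Field F] {L : Type*} [LieRing L] [LieAlgebra F L]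
    (M : LieSubalgebra F L) : Prop :=
  M ≠ ⊤ ∧ ∀ K : LieSubalgebra F L, M < K → K = ⊤

/-- `C/D` is a chief factor of `L`: `D < C` are ideals of `L` and there is no ideal of `L`
strictly between them (equivalently, `C/D` is a minimal nonzero ideal of `L/D`). -/
def IsChiefFactor {F : Type*} [Field F] {L : Type*} [LieRing L] [LieAlgebra F L]
    (D C : LieIdeal F L) : Prop :=
  D < C ∧ ∀ K : LieIdeal F L, D ≤ K → K ≤ C → K = D ∨ K = C

/-- The subquotient `S/(S ∩ D)`, as a Lie algebra; when `D ⊆ S` this is `S/D`. -/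
abbrev SubQuot {F : Type*} [Field F] {L : Type*} [LieRing L] [LieAlgebra F L]
    (S : LieSubalgebra F L) (D : LieIdeal F L) :=
  S ⧸ LieIdeal.comap S.incl D

/-- The core `M_L` of a subalgebra `M`: the largest ideal of `L` contained in `M`. -/
def coreOf {F : Type*} [Field F] {L : Type*} [LieRing L] [LieAlgebra F L]
    (M : LieSubalgebra F L) : LieIdeal F L :=
  sSup {I : LieIdeal F L | (I : Set L) ⊆ M}

/-!
Among the ideals `D ≤ C` with `M + D = L` choose a minimal one, and put `I = M_L ∩ D`;
since `M ∩ C ⊆ M_L`, this is `M ∩ D`. For an ideal `I ≤ K ≤ D`, the subalgebra `M + K` is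
`M` or `L` by maximality of `M`: in the first case `K ⊆ M_L ∩ D = I`, in the second `K = D`
by minimality.
-/

namespace LieSubalgebra

variable {R L : Type*} [CommRing R] [LieRing L] [LieAlgebra R L]

def supLieIdeal (M : LieSubalgebra R L) (K : LieIdeal R L) : LieSubalgebra R L where
  toSubmodule := M.toSubmodule ⊔ K.toSubmodule
  lie_mem' {x y} hx hy := by
    obtain ⟨m, hm, k, hk, rfl⟩ := Submodule.mem_sup.mp hx
    obtain ⟨m', hm', k', hk', rfl⟩ := Submodule.mem_sup.mp hy
    rw [add_lie, lie_add, add_assoc]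
    exact Submodule.add_mem_sup (M.lie_mem hm hm')
      (add_mem (lie_mem_right R L K m k' hk') (lie_mem_left R L K k _ hk))

theorem le_supLieIdeal (M : LieSubalgebra R L) (K : LieIdeal R L) : M ≤ M.supLieIdeal K :=
  fun _ hx ↦ Submodule.mem_sup_left hx

end LieSubalgebra

section Core

variable {F L : Type*} [Field F] [LieRing L] [LieAlgebra F L] {M : LieSubalgebra F L}

theorem coreOf_toSubmodule_le : (coreOf M).toSubmodule ≤ M.toSubmodule := by
  rw [coreOf, LieSubmodule.sSup_toSubmodule]
  exact sSup_le fun _ ⟨_, hI, hp⟩ ↦ hp ▸ hI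

theorem le_coreOf_iff {I : LieIdeal F L} : I ≤ coreOf M ↔ I.toSubmodule ≤ M.toSubmodule :=
  ⟨fun h ↦ ((LieSubmodule.toSubmodule_le_toSubmodule _ _).mpr h).trans coreOf_toSubmodule_le,
    fun h ↦ le_sSup h⟩

theorem IsMaximalSubalgebra.sup_eq_top_or_le (hM : IsMaximalSubalgebra M) (K : LieIdeal F L) :
    M.toSubmodule ⊔ K.toSubmodule = ⊤ ∨ K.toSubmodule ≤ M.toSubmodule := by
  rcases (M.le_supLieIdeal K).lt_or_eq with hlt | heq
  · left
    rw [← LieSubalgebra.top_toSubmodule, ← hM.2 _ hlt]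
    rfl
  · right
    rw [heq]
    exact le_sup_right

theorem IsMaximalSubalgebra.isChiefFactor_coreOf_inf (hM : IsMaximalSubalgebra M)
    {D : LieIdeal F L}
    (hD : Minimal (fun K : LieIdeal F L ↦ M.toSubmodule ⊔ K.toSubmodule = ⊤) D) :
    IsChiefFactor (coreOf M ⊓ D) D := by
  refine ⟨inf_le_right.lt_of_ne fun hID ↦ hM.1 ?_, fun K hIK hKD ↦ ?_⟩
  · have hDM : D.toSubmodule ≤ M.toSubmodule := le_coreOf_iff.mp (inf_eq_right.mp hID)
    rw [← LieSubalgebra.toSubmodule_eq_top, ← hD.1, sup_eq_left.mpr hDM]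
  · rcases hM.sup_eq_top_or_le K with hsup | hKM
    · exact Or.inr (le_antisymm hKD (hD.2 hsup hKD))
    · exact Or.inl (le_antisymm (le_inf (le_coreOf_iff.mpr hKM) hKD) hIK)

end Core

/-- If a maximal subalgebra `M` of a finite-dimensional Lie algebra `L` is a c-ideal
(there is an ideal `C` with `L = M + C` and `M ∩ C ⊆ M_L`), then there is an ideal `C`
with `L = M + C`, `M ∩ C` an ideal of `L`, and `C/(M ∩ C)` a chief factor of `L`. -/
theorem cIdeal_gives_chief_complement {F : Type*} [Field F] {L : Type*} [LieRing L]
    [LieAlgebra F L] [FiniteDimensional F L] (M : LieSubalgebra F L)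
    (hM : IsMaximalSubalgebra M)
    (h : ∃ C : LieIdeal F L, M.toSubmodule ⊔ C.toSubmodule = ⊤ ∧
      (M : Set L) ∩ (C : Set L) ⊆ (coreOf M : Set L)) :
    ∃ C : LieIdeal F L, M.toSubmodule ⊔ C.toSubmodule = ⊤ ∧
      ∃ I : LieIdeal F L, (I : Set L) = (M : Set L) ∩ (C : Set L) ∧ IsChiefFactor I C := by
  obtain ⟨C, hC, hCcore⟩ := h
  have := LieSubmodule.wellFoundedLT_of_isArtinian F L L
  obtain ⟨D, hDC, hD⟩ := exists_minimal_le_of_wellFoundedLT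
    (fun K : LieIdeal F L ↦ M.toSubmodule ⊔ K.toSubmodule = ⊤) C hC
  refine ⟨D, hD.1, coreOf M ⊓ D, ?_, hM.isChiefFactor_coreOf_inf hD⟩
  rw [LieSubmodule.coe_inf]
  exact subset_antisymm (Set.inter_subset_inter_left _ coreOf_toSubmodule_le)
    fun x hx ↦ ⟨hCcore ⟨hx.1, hDC hx.2⟩, hx.2⟩
end

section
/- Let L be a finite-dimensional Lie algebra, M a maximal subalgebra of L, and C/D a chief factor of L with D ⊆ M and L = M + C. If D ⊆ M_L ∩ C and M_L ∩ C ≠ C, then, setting E = C + M_L, the quotient (M ∩ E)/M_L is isomorphic as a Lie algebra to (M ∩ C)/(M_L ∩ C) = (M ∩ C)/D. -/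
/-- Quotient map by a Lie ideal as a morphism of Lie algebras. -/
def mkLieHom {F : Type*} [Field F] {L : Type*} [LieRing L] [LieAlgebra F L]
    (I : LieIdeal F L) : L →ₗ⁅F⁆ L ⧸ I :=
  { (LieSubmodule.Quotient.mk' I).toLinearMap with
    map_lie' := fun {x y} => (LieSubmodule.Quotient.mk_bracket I x y) }

/-- Quotients by equal Lie ideals are equivalent. -/
def lieQuotEquivOfEq {F : Type*} [Field F] {L : Type*} [LieRing L] [LieAlgebra F L]
    {I I' : LieIdeal F L} (h : I = I') : (L ⧸ I) ≃ₗ⁅F⁆ (L ⧸ I') := by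
  subst h; exact LieEquiv.refl

theorem mkLieHom_apply {F : Type*} [Field F] {L : Type*} [LieRing L] [LieAlgebra F L]
    (I : LieIdeal F L) (x : L) : mkLieHom I x = LieSubmodule.Quotient.mk (N := I) x := rfl

/-- Reduction of a c-section to one over the core: if `C/D` is a chief factor of `L` with
`D ⊆ M`, `L = M + C`, `D ⊆ M_L ∩ C` and `M_L ∩ C ≠ C`, then `M_L ∩ C = D` and, with
`E = C + M_L`, the quotient `(M ∩ E)/M_L` is isomorphic to `(M ∩ C)/D`. -/
theorem cSection_core_reduction {F : Type*} [Field F] {L : Type*} [LieRing L]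
    [LieAlgebra F L] [FiniteDimensional F L] (M : LieSubalgebra F L)
    (hM : IsMaximalSubalgebra M) (C D : LieIdeal F L)
    (hchief : IsChiefFactor D C) (hDM : (D : Set L) ⊆ (M : Set L))
    (hsup : M.toSubmodule ⊔ C.toSubmodule = ⊤)
    (hD : D ≤ coreOf M ⊓ C) (hne : coreOf M ⊓ C ≠ C) :
    coreOf M ⊓ C = D ∧
      Nonempty (SubQuot (M ⊓ ((C ⊔ coreOf M : LieIdeal F L) : LieSubalgebra F L)) (coreOf M)
        ≃ₗ⁅F⁆ SubQuot (M ⊓ (C : LieSubalgebra F L)) D) := by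
  obtain ⟨hDC, hmin⟩ := hchief
  have hcore_le : ∀ x : L, x ∈ coreOf M → x ∈ M := by
    intro x hx
    have h1 : (coreOf M).toSubmodule ≤ M.toSubmodule := by
      rw [coreOf, LieSubmodule.sSup_toSubmodule]
      apply sSup_le
      rintro s ⟨I, hI, rfl⟩
      intro y hy
      exact hI hy
    exact h1 hx
  have hKD : coreOf M ⊓ C = D := by
    rcases hmin (coreOf M ⊓ C) hD inf_le_right with h | h
    · exact h
    · exact absurd h hne
  refine ⟨hKD, ?_⟩
  set E : LieIdeal F L := C ⊔ coreOf M with hE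
  have hle : (M ⊓ (C : LieSubalgebra F L)) ≤ (M ⊓ (E : LieSubalgebra F L)) := by
    intro x hx
    rcases hx with ⟨hxM, hxC⟩
    exact ⟨hxM, le_sup_left (a := C) (b := coreOf M) hxC⟩
  set J : LieIdeal F ↥(M ⊓ (E : LieSubalgebra F L)) :=
    LieIdeal.comap (M ⊓ (E : LieSubalgebra F L)).incl (coreOf M) with hJ
  set φ : ↥(M ⊓ (C : LieSubalgebra F L)) →ₗ⁅F⁆ ↥(M ⊓ (E : LieSubalgebra F L)) ⧸ J :=
    (mkLieHom J).comp (LieSubalgebra.inclusion hle) with hφ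
  have hφ_apply : ∀ x, φ x = LieSubmodule.Quotient.mk (N := J) (LieSubalgebra.inclusion hle x) :=
    fun x => rfl
  have hker : φ.ker = LieIdeal.comap (M ⊓ (C : LieSubalgebra F L)).incl D := by
    ext x
    rw [LieHom.mem_ker, LieIdeal.mem_comap, hφ_apply, LieSubmodule.Quotient.mk_eq_zero',
      hJ, LieIdeal.mem_comap]
    have hxC : ((M ⊓ (C : LieSubalgebra F L)).incl x : L) ∈ C := x.2.2
    constructor
    · intro h
      have : ((M ⊓ (C : LieSubalgebra F L)).incl x : L) ∈ coreOf M ⊓ C :=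
        ⟨h, hxC⟩
      rwa [hKD] at this
    · intro h
      have : ((M ⊓ (C : LieSubalgebra F L)).incl x : L) ∈ coreOf M ⊓ C := hKD ▸ h
      exact this.1
  have hsurj : Function.Surjective φ := by
    intro y
    obtain ⟨x, rfl⟩ := LieSubmodule.Quotient.surjective_mk' J y
    have hxE : (x : L) ∈ C ⊔ coreOf M := x.2.2
    rw [LieSubmodule.mem_sup] at hxE
    obtain ⟨c, hc, k, hk, hck⟩ := hxE
    have hcM : c ∈ M := by
      have : c = (x : L) - k := by rw [← hck]; abel
      rw [this]
      exact M.sub_mem x.2.1 (hcore_le k hk)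
    refine ⟨⟨c, hcM, hc⟩, ?_⟩
    rw [hφ_apply]
    show LieSubmodule.Quotient.mk (N := J) (LieSubalgebra.inclusion hle ⟨c, hcM, hc⟩)
      = LieSubmodule.Quotient.mk (N := J) x
    rw [Submodule.Quotient.eq]
    show (LieSubalgebra.inclusion hle ⟨c, hcM, hc⟩ : ↥(M ⊓ (E : LieSubalgebra F L))) - x ∈ J
    rw [hJ, LieIdeal.mem_comap]
    have hval : ((M ⊓ (E : LieSubalgebra F L)).incl
        (LieSubalgebra.inclusion hle ⟨c, hcM, hc⟩ - x) : L) = c - (x : L) := rfl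
    rw [hval]
    have : c - (x : L) = -k := by rw [← hck]; abel
    rw [this]
    exact (coreOf M).neg_mem hk
  have e1 := φ.quotKerEquivRange
  have hrange : φ.range = ⊤ := (LieHom.range_eq_top (f := φ)).mpr hsurj
  have e2 : (φ.range : LieSubalgebra F (↥(M ⊓ (E : LieSubalgebra F L)) ⧸ J)) ≃ₗ⁅F⁆
      (⊤ : LieSubalgebra F (↥(M ⊓ (E : LieSubalgebra F L)) ⧸ J)) :=
    LieEquiv.ofEq _ _ (by rw [hrange])
  have e3 : (⊤ : LieSubalgebra F (↥(M ⊓ (E : LieSubalgebra F L)) ⧸ J)) ≃ₗ⁅F⁆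
      (↥(M ⊓ (E : LieSubalgebra F L)) ⧸ J) := LieSubalgebra.topEquiv
  exact ⟨((e1.trans (e2.trans e3)).symm.trans (lieQuotEquivOfEq hker))⟩
end

section
/- Let L be a finite-dimensional Lie algebra, M a maximal subalgebra of L, and B an ideal of L with B ⊆ M. If (C/B)/(D/B) is a c-section of M/B in L/B (i.e., (C/B)/(D/B) is a chief factor of L/B with D/B ⊆ M/B and L/B = M/B + C/B), then (M ∩ C)/D is a c-section of M in L, and ((M/B) ∩ (C/B))/(D/B) is isomorphic as a Lie algebra to (M ∩ C)/D. -/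
/-- The natural quotient map `L → L/B` as a morphism of Lie algebras. -/
def lieQuotMap {F : Type*} [Field F] {L : Type*} [LieRing L] [LieAlgebra F L]
    (B : LieIdeal F L) : L →ₗ⁅F⁆ L ⧸ B :=
  { B.toSubmodule.mkQ with map_lie' := rfl }

/-!
Everything lifts along the quotient map `π : L → L/B`. Since `B ⊆ D ⊆ C`, `π` is injective on
the ideals of `L` lying between `D` and `C`, so `C/D` is a chief factor of `L`; since `B ⊆ M`,
membership in `M` and in `M + C` can be tested after applying `π`. For the isomorphism, `π`
restricts to a surjection `M ∩ C → π(M) ∩ π(C)` (the equality `π(M ∩ C) = π(M) ∩ π(C)` uses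
`B ⊆ C`), and an element of `M ∩ C` lands in `π(D)` exactly when it lies in `D`, because `B ⊆ D`.
-/

namespace LieHom

variable {R : Type*} [CommRing R] {L L' : Type*} [LieRing L] [LieAlgebra R L]
  [LieRing L'] [LieAlgebra R L']

def lieSubalgebraMap (f : L →ₗ⁅R⁆ L') (S : LieSubalgebra R L) : S →ₗ⁅R⁆ S.map f where
  toFun x := ⟨f x, x, x.2, rfl⟩
  map_add' x y := Subtype.ext (f.map_add x y)
  map_smul' r x := Subtype.ext (f.map_smul r x)
  map_lie' {x y} := Subtype.ext (f.map_lie x y)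

theorem lieSubalgebraMap_surjective (f : L →ₗ⁅R⁆ L') (S : LieSubalgebra R L) :
    Function.Surjective (f.lieSubalgebraMap S) := by
  rintro ⟨_, x, hx, rfl⟩
  exact ⟨⟨x, hx⟩, rfl⟩

theorem nonempty_quot_equiv_of_surjective (f : L →ₗ⁅R⁆ L') (hf : Function.Surjective f)
    {I : LieIdeal R L} (hI : f.ker = I) : Nonempty ((L ⧸ I) ≃ₗ⁅R⁆ L') := by
  subst hI
  rw [← f.range_eq_top] at hf
  exact ⟨f.quotKerEquivRange.trans ((LieEquiv.ofEq _ _ (congrArg SetLike.coe hf)).trans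
    LieSubalgebra.topEquiv)⟩

end LieHom

section QuotientMap

variable {F : Type*} [Field F] {L : Type*} [LieRing L] [LieAlgebra F L] {B : LieIdeal F L}

theorem lieQuotMap_surjective (B : LieIdeal F L) : Function.Surjective (lieQuotMap B) :=
  Submodule.mkQ_surjective B.toSubmodule

theorem lieQuotMap_eq_zero_iff {x : L} : lieQuotMap B x = 0 ↔ x ∈ B :=
  Submodule.Quotient.mk_eq_zero B.toSubmodule

theorem ker_lieQuotMap (B : LieIdeal F L) : (lieQuotMap B).ker = B := by
  ext x
  exact lieQuotMap_eq_zero_iff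

namespace LieIdeal

theorem comap_map_lieQuotMap {I : LieIdeal F L} (hBI : B ≤ I) :
    (I.map (lieQuotMap B)).comap (lieQuotMap B) = I := by
  have hcoe : ((I.map (lieQuotMap B) : LieIdeal F (L ⧸ B)) : Set (L ⧸ B)) = lieQuotMap B '' I :=
    congrArg SetLike.coe (coe_map_of_surjective (lieQuotMap_surjective B))
  rw [comap_map_eq hcoe, ker_lieQuotMap, sup_eq_left.mpr hBI]

theorem lieQuotMap_mem_map_iff {I : LieIdeal F L} (hBI : B ≤ I) {x : L} :
    lieQuotMap B x ∈ I.map (lieQuotMap B) ↔ x ∈ I := by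
  rw [← mem_comap, comap_map_lieQuotMap hBI]

theorem eq_of_map_lieQuotMap_eq {I J : LieIdeal F L} (hBI : B ≤ I) (hBJ : B ≤ J)
    (h : I.map (lieQuotMap B) = J.map (lieQuotMap B)) : I = J := by
  rw [← comap_map_lieQuotMap hBI, h, comap_map_lieQuotMap hBJ]

end LieIdeal

theorem IsChiefFactor.of_map_lieQuotMap {C D : LieIdeal F L} (hBD : B ≤ D) (hDC : D ≤ C)
    (h : IsChiefFactor (D.map (lieQuotMap B)) (C.map (lieQuotMap B))) : IsChiefFactor D C := by
  refine ⟨lt_of_le_of_ne hDC fun hDC' => h.1.ne (congrArg _ hDC'), fun K hDK hKC => ?_⟩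
  have hBK := hBD.trans hDK
  exact (h.2 _ (LieIdeal.map_mono hDK) (LieIdeal.map_mono hKC)).imp
    (LieIdeal.eq_of_map_lieQuotMap_eq hBK hBD)
    (LieIdeal.eq_of_map_lieQuotMap_eq hBK (hBD.trans hDC))

namespace LieSubalgebra

theorem lieQuotMap_mem_map_iff {M : LieSubalgebra F L} (hBM : (B : Set L) ⊆ M) {x : L} :
    lieQuotMap B x ∈ M.map (lieQuotMap B) ↔ x ∈ M := by
  refine ⟨fun ⟨m, hm, hmx⟩ => ?_, fun hx => ⟨x, hx, rfl⟩⟩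
  have hmx : m - x ∈ B := (Submodule.Quotient.eq B.toSubmodule).mp hmx
  simpa using M.sub_mem hm (hBM hmx)

theorem sup_eq_top_of_map_lieQuotMap {M : LieSubalgebra F L} {C : LieIdeal F L}
    (hBM : (B : Set L) ⊆ M)
    (h : (M.map (lieQuotMap B)).toSubmodule ⊔ (C.map (lieQuotMap B)).toSubmodule = ⊤) :
    M.toSubmodule ⊔ C.toSubmodule = ⊤ := by
  rw [LieIdeal.coe_map_of_surjective (lieQuotMap_surjective B)] at h
  change M.toSubmodule.map B.toSubmodule.mkQ ⊔ C.toSubmodule.map B.toSubmodule.mkQ = ⊤ at h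
  rw [← Submodule.map_sup, Submodule.map_mkQ_eq_top, ← sup_assoc] at h
  rwa [sup_eq_right.mpr (show B.toSubmodule ≤ M.toSubmodule from hBM)] at h

theorem map_lieQuotMap_inf (M : LieSubalgebra F L) {C : LieIdeal F L} (hBC : B ≤ C) :
    M.map (lieQuotMap B) ⊓ (C.map (lieQuotMap B) : LieSubalgebra F (L ⧸ B)) =
      (M ⊓ (C : LieSubalgebra F L)).map (lieQuotMap B) := by
  ext y
  constructor
  · rintro ⟨⟨m, hm, rfl⟩, hmC⟩
    exact ⟨m, ⟨hm, (LieIdeal.lieQuotMap_mem_map_iff hBC).mp hmC⟩, rfl⟩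
  · rintro ⟨m, ⟨hm, hmC⟩, rfl⟩
    exact ⟨⟨m, hm, rfl⟩, LieIdeal.mem_map (show m ∈ C from hmC)⟩

theorem nonempty_subQuot_equiv_subQuot_map_lieQuotMap (S : LieSubalgebra F L) {D : LieIdeal F L}
    (hBD : B ≤ D) :
    Nonempty (SubQuot S D ≃ₗ⁅F⁆ SubQuot (S.map (lieQuotMap B)) (D.map (lieQuotMap B))) := by
  let J := LieIdeal.comap (S.map (lieQuotMap B)).incl (D.map (lieQuotMap B))
  let π : S →ₗ⁅F⁆ SubQuot (S.map (lieQuotMap B)) (D.map (lieQuotMap B)) :=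
    (lieQuotMap J).comp ((lieQuotMap B).lieSubalgebraMap S)
  have hπ : Function.Surjective π :=
    (lieQuotMap_surjective J).comp ((lieQuotMap B).lieSubalgebraMap_surjective S)
  refine π.nonempty_quot_equiv_of_surjective hπ ?_
  ext x
  exact lieQuotMap_eq_zero_iff.trans (LieIdeal.lieQuotMap_mem_map_iff hBD)

end LieSubalgebra

end QuotientMap

theorem cSection_quotient_general {F : Type*} [Field F] {L : Type*} [LieRing L]
    [LieAlgebra F L] (M : LieSubalgebra F L)
    (B C D : LieIdeal F L)
    (hBM : (B : Set L) ⊆ (M : Set L)) (hBD : B ≤ D) (hDC : D ≤ C)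
    (hchief' : IsChiefFactor (LieIdeal.map (lieQuotMap B) D) (LieIdeal.map (lieQuotMap B) C))
    (hDM' : ((LieIdeal.map (lieQuotMap B) D : LieIdeal F (L ⧸ B)) : Set (L ⧸ B)) ⊆
      ((M.map (lieQuotMap B) : LieSubalgebra F (L ⧸ B)) : Set (L ⧸ B)))
    (hsup' : (M.map (lieQuotMap B)).toSubmodule ⊔ (LieIdeal.map (lieQuotMap B) C).toSubmodule = ⊤) :
    (IsChiefFactor D C ∧ (D : Set L) ⊆ (M : Set L) ∧ M.toSubmodule ⊔ C.toSubmodule = ⊤) ∧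
      Nonempty (SubQuot (M.map (lieQuotMap B) ⊓
          ((LieIdeal.map (lieQuotMap B) C) : LieSubalgebra F (L ⧸ B)))
          (LieIdeal.map (lieQuotMap B) D)
        ≃ₗ⁅F⁆ SubQuot (M ⊓ (C : LieSubalgebra F L)) D) := by
  have hDM : (D : Set L) ⊆ M := fun x hx =>
    (LieSubalgebra.lieQuotMap_mem_map_iff hBM).mp (hDM' (LieIdeal.mem_map hx))
  refine ⟨⟨IsChiefFactor.of_map_lieQuotMap hBD hDC hchief', hDM,
    LieSubalgebra.sup_eq_top_of_map_lieQuotMap hBM hsup'⟩, ?_⟩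
  rw [LieSubalgebra.map_lieQuotMap_inf M (hBD.trans hDC)]
  exact ((M ⊓ (C : LieSubalgebra F L)).nonempty_subQuot_equiv_subQuot_map_lieQuotMap hBD).map
    LieEquiv.symm

/-- If `B` is an ideal of `L` contained in a maximal subalgebra `M`, and `(C/B)/(D/B)` is a
c-section of `M/B` in `L/B`, then `(M ∩ C)/D` is a c-section of `M` in `L` and
`((M/B) ∩ (C/B))/(D/B) ≅ (M ∩ C)/D`. -/
theorem cSection_quotient {F : Type*} [Field F] {L : Type*} [LieRing L]
    [LieAlgebra F L] [FiniteDimensional F L] (M : LieSubalgebra F L)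
    (hM : IsMaximalSubalgebra M) (B C D : LieIdeal F L)
    (hBM : (B : Set L) ⊆ (M : Set L)) (hBD : B ≤ D) (hDC : D ≤ C)
    (hchief' : IsChiefFactor (LieIdeal.map (lieQuotMap B) D) (LieIdeal.map (lieQuotMap B) C))
    (hDM' : ((LieIdeal.map (lieQuotMap B) D : LieIdeal F (L ⧸ B)) : Set (L ⧸ B)) ⊆
      ((M.map (lieQuotMap B) : LieSubalgebra F (L ⧸ B)) : Set (L ⧸ B)))
    (hsup' : (M.map (lieQuotMap B)).toSubmodule ⊔ (LieIdeal.map (lieQuotMap B) C).toSubmodule = ⊤) :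
    (IsChiefFactor D C ∧ (D : Set L) ⊆ (M : Set L) ∧ M.toSubmodule ⊔ C.toSubmodule = ⊤) ∧
      Nonempty (SubQuot (M.map (lieQuotMap B) ⊓
          ((LieIdeal.map (lieQuotMap B) C) : LieSubalgebra F (L ⧸ B)))
          (LieIdeal.map (lieQuotMap B) D)
        ≃ₗ⁅F⁆ SubQuot (M ⊓ (C : LieSubalgebra F L)) D) :=
  cSection_quotient_general M B C D hBM hBD hDC hchief' hDM' hsup'
end

section
/- Let L be a finite-dimensional Lie algebra over a field F. If every maximal subalgebra M of L has trivial c-section (i.e., for every chief factor C/D of L with D ⊆ M and L = M + C one has M ∩ C = D), then L is solvable. -/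
section

variable {F L : Type*} [Field F] [LieRing L] [LieAlgebra F L]

lemma isMaximalSubalgebra_iff_isCoatom {M : LieSubalgebra F L} :
    IsMaximalSubalgebra M ↔ IsCoatom M :=
  Iff.rfl

lemma isChiefFactor_iff_covBy {D C : LieIdeal F L} : IsChiefFactor D C ↔ D ⋖ C :=
  covBy_iff_lt_and_eq_or_eq.symm

end

section

open LieAlgebra LieModule

variable {R L : Type*} [CommRing R] [LieRing L] [LieAlgebra R L]

namespace LieSubalgebra

lemma toSubmodule_sup_lieIdeal (K : LieSubalgebra R L) (I : LieIdeal R L) :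
    (K ⊔ I.toLieSubalgebra R L).toSubmodule = K.toSubmodule ⊔ I.toSubmodule := by
  let S : LieSubalgebra R L :=
    { K.toSubmodule ⊔ I.toSubmodule with
      lie_mem' := by
        intro a b ha hb
        obtain ⟨k, hk, i, hi, rfl⟩ := Submodule.mem_sup.mp ha
        obtain ⟨k', hk', i', hi', rfl⟩ := Submodule.mem_sup.mp hb
        rw [add_lie, lie_add, add_assoc]
        exact Submodule.add_mem_sup (K.lie_mem hk hk')
          (I.add_mem (lie_mem_right R L I k i' hi') (lie_mem_left R L I i _ hi)) }
  refine le_antisymm (show K ⊔ I.toLieSubalgebra R L ≤ S from sup_le ?_ ?_) (sup_le ?_ ?_)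
  · exact fun y hy => Submodule.mem_sup_left hy
  · exact fun y hy => Submodule.mem_sup_right hy
  · exact fun y hy => (le_sup_left : K ≤ _) hy
  · exact fun y hy => (le_sup_right : I.toLieSubalgebra R L ≤ _) hy

/-- Fitting's lemma for `ad x`: its stable range lies in every ideal containing `x`. -/
lemma engel_toSubmodule_sup_eq_top_of_mem [IsNoetherian R L] [IsArtinian R L]
    (I : LieIdeal R L) {x : L} (hx : x ∈ I) :
    (engel R x).toSubmodule ⊔ I.toSubmodule = ⊤ := by
  refine top_le_iff.mp <| (ad R L x).isCompl_iSup_ker_pow_iInf_range_pow.codisjoint.top_le.trans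
    (sup_le_sup (iSup_le fun n y hy => (mem_engel_iff R x y).mpr ⟨n, hy⟩) (iInf_le_of_le 1 ?_))
  rintro _ ⟨y, rfl⟩
  simpa using lie_mem_left R L I x y hx

end LieSubalgebra

open LieSubalgebra

lemma engel_toSubmodule_sup_eq_top_of_cSections_trivial [IsNoetherian R L] [IsArtinian R L]
    {D C : LieIdeal R L}
    (h : ∀ M : LieSubalgebra R L, IsCoatom M → (D : Set L) ⊆ M →
      M.toSubmodule ⊔ C.toSubmodule = ⊤ → (M : Set L) ∩ C ⊆ D)
    {x : L} (hx : x ∈ C) :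
    (engel R x).toSubmodule ⊔ D.toSubmodule = ⊤ := by
  by_contra hne
  have hE : engel R x ⊔ D.toLieSubalgebra R L ≠ ⊤ := fun htop =>
    hne (by rw [← toSubmodule_sup_lieIdeal, htop, LieSubalgebra.top_toSubmodule])
  obtain ⟨M, hM, hEM⟩ := (eq_top_or_exists_le_coatom _).resolve_left hE
  have hengel : engel R x ≤ M := le_sup_left.trans hEM
  have hMC : M.toSubmodule ⊔ C.toSubmodule = ⊤ :=
    top_le_iff.mp ((engel_toSubmodule_sup_eq_top_of_mem C hx).symm.le.trans
      (sup_le_sup_right (show (engel R x).toSubmodule ≤ M.toSubmodule from hengel) _))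
  have hxD : x ∈ D :=
    h M hM (fun y hy => (le_sup_right.trans hEM : D.toLieSubalgebra R L ≤ M) hy) hMC
      ⟨hengel (self_mem_engel R x), hx⟩
  exact hne (engel_toSubmodule_sup_eq_top_of_mem D hxD)

lemma isNilpotent_toEnd_quotient_of_engel_sup_eq_top [IsNoetherian R L] {D : LieIdeal R L}
    {x : L} (h : (engel R x).toSubmodule ⊔ D.toSubmodule = ⊤) :
    IsNilpotent (toEnd R L (L ⧸ D) x) := by
  rw [Module.End.isNilpotent_iff_of_finite]
  intro q
  obtain ⟨y, rfl⟩ := LieSubmodule.Quotient.surjective_mk' D q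
  obtain ⟨e, he, d, hd, rfl⟩ := Submodule.mem_sup.mp (h ▸ Submodule.mem_top : y ∈ _)
  obtain ⟨n, hn⟩ := (mem_engel_iff R x e).mp he
  refine ⟨n, ?_⟩
  rw [map_add, (LieSubmodule.Quotient.mk_eq_zero D).mpr hd, add_zero, toEnd_pow_apply_map]
  exact (LieSubmodule.Quotient.mk_eq_zero D).mpr (hn ▸ D.zero_mem)

namespace LieSubmodule

variable {M : Type*} [AddCommGroup M] [Module R M] [LieRingModule L M] [LieModule R L M]

def colon (N : LieSubmodule R L M) (I : LieIdeal R L) : LieSubmodule R L M where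
  carrier := {m | ∀ x ∈ I, ⁅x, m⁆ ∈ N}
  add_mem' hm hm' x hx := by rw [lie_add]; exact N.add_mem (hm x hx) (hm' x hx)
  zero_mem' x _ := by rw [lie_zero]; exact N.zero_mem
  smul_mem' t m hm x hx := by rw [lie_smul]; exact N.smul_mem t (hm x hx)
  lie_mem {y m} hm x hx := by
    rw [leibniz_lie]
    exact N.add_mem (hm _ (lie_mem_left R L I x y hx)) (N.lie_mem (hm x hx))

lemma lie_le_iff_le_colon {N N' : LieSubmodule R L M} {I : LieIdeal R L} :
    ⁅I, N'⁆ ≤ N ↔ N' ≤ N.colon I := by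
  rw [lie_le_iff]
  exact ⟨fun h m hm x hx => h x hx m hm, fun h x hx m hm => h hm x hx⟩

end LieSubmodule

open LieSubmodule

/-- Engel's theorem for `C` acting on `C/D`, realised as the image of `C` in `L/D`. -/
lemma exists_mem_colon_notMem_of_isNilpotent [IsNoetherian R L] {D C : LieIdeal R L}
    (hDC : D < C) (hnil : ∀ x ∈ C, IsNilpotent (toEnd R L (L ⧸ D) x)) :
    ∃ z ∈ C, z ∉ D ∧ z ∈ D.colon C := by
  let Cbar : LieSubmodule R L (L ⧸ D) :=
    LieSubmodule.map (LieSubmodule.Quotient.mk' D) C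
  obtain ⟨z₀, hz₀C, hz₀D⟩ := SetLike.exists_of_lt hDC
  have : Nontrivial Cbar :=
    ⟨⟨⟨LieSubmodule.Quotient.mk' D z₀, mem_map_of_mem hz₀C⟩, 0, fun h =>
      hz₀D ((LieSubmodule.Quotient.mk_eq_zero D).mp (congrArg Subtype.val h))⟩⟩
  have : LieModule.IsNilpotent C Cbar := by
    refine (isNilpotent_iff_forall' (R := R)).mpr fun x => ?_
    obtain ⟨n, hn⟩ := hnil x x.2
    refine ⟨n, LinearMap.ext fun q => Subtype.ext ?_⟩
    change ((toEnd R L Cbar (x : L) ^ n) q : L ⧸ D) = 0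
    rw [coe_toEnd_pow, hn, LinearMap.zero_apply]
  have := nontrivial_max_triv_of_isNilpotent R C Cbar
  obtain ⟨⟨⟨_, hq⟩, hqtriv⟩, hq0⟩ := exists_ne (0 : maxTrivSubmodule R C Cbar)
  obtain ⟨z, hzC, rfl⟩ := (LieSubmodule.mem_map _).mp hq
  refine ⟨z, hzC, fun hzD => hq0 ?_, fun x hx => ?_⟩
  · ext
    exact (LieSubmodule.Quotient.mk_eq_zero D).mpr hzD
  · have := (mem_maxTrivSubmodule R C Cbar _).mp hqtriv ⟨x, hx⟩
    rw [← LieSubmodule.Quotient.mk_eq_zero D]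
    exact congrArg Subtype.val this

lemma lie_le_of_covBy_of_isNilpotent [IsNoetherian R L] {D C : LieIdeal R L} (hDC : D ⋖ C)
    (hnil : ∀ x ∈ C, IsNilpotent (toEnd R L (L ⧸ D) x)) :
    ⁅C, C⁆ ≤ D := by
  obtain ⟨z, hzC, hzD, hz⟩ := exists_mem_colon_notMem_of_isNilpotent hDC.lt hnil
  have hD : D ≤ D.colon C ⊓ C :=
    le_inf (fun y hy x _ => lie_mem_right R L D x y hy) hDC.le
  rw [lie_le_iff_le_colon]
  rcases hDC.eq_or_eq hD inf_le_right with hbot | htop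
  · exact absurd (hbot.le ⟨hz, hzC⟩) hzD
  · exact htop.ge.trans inf_le_left

lemma isSolvable_of_forall_covBy_lie_le [IsNoetherian R L] [IsArtinian R L]
    (h : ∀ D C : LieIdeal R L, D ⋖ C → ⁅C, C⁆ ≤ D) : IsSolvable L := by
  have := LieSubmodule.wellFoundedLT_of_isArtinian R L L
  obtain ⟨_, ⟨k, rfl⟩, hmin⟩ :=
    wellFounded_lt.has_min (Set.range (derivedSeries R L)) ⟨_, 0, rfl⟩
  refine (isSolvable_iff R L).mpr ⟨k, ?_⟩
  by_contra hne
  obtain ⟨D, -, hD⟩ := exists_le_covBy_of_lt (bot_lt_iff_ne_bot.mpr hne)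
  refine hmin _ ⟨k + 1, rfl⟩ (lt_of_le_of_lt ?_ hD.lt)
  exact (derivedSeriesOfIdeal_succ R L ⊤ k).le.trans (h D _ hD)

end

/-- If every maximal subalgebra of a finite-dimensional Lie algebra `L` has trivial
c-section, then `L` is solvable. -/
theorem solvable_of_all_cSections_trivial {F : Type*} [Field F] {L : Type*} [LieRing L]
    [LieAlgebra F L] [FiniteDimensional F L]
    (h : ∀ M : LieSubalgebra F L, IsMaximalSubalgebra M →
      ∀ C D : LieIdeal F L, IsChiefFactor D C → (D : Set L) ⊆ (M : Set L) →
        M.toSubmodule ⊔ C.toSubmodule = ⊤ → (M : Set L) ∩ (C : Set L) = (D : Set L)) :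
    LieAlgebra.IsSolvable L := by
  refine isSolvable_of_forall_covBy_lie_le (R := F) fun D C hDC =>
    lie_le_of_covBy_of_isNilpotent hDC fun x hx =>
      isNilpotent_toEnd_quotient_of_engel_sup_eq_top <|
        engel_toSubmodule_sup_eq_top_of_cSections_trivial (fun M hM hDM hMC => ?_) hx
  exact (h M (isMaximalSubalgebra_iff_isCoatom.mpr hM) C D (isChiefFactor_iff_covBy.mpr hDC)
    hDM hMC).subset
end

section
/- Let L be a finite-dimensional solvable Lie algebra over a field F. Then every maximal subalgebra M of L has trivial c-section: for every chief factor C/D of L with D ⊆ M and L = M + C, one has M ∩ C = D. -/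
/-!
Chief factors of a solvable Lie algebra are abelian, so `⁅C, M ∩ C⁆ ⊆ ⁅C, C⁆ ⊆ D ⊆ M`.
Together with `L = M + C` this makes `M ∩ C` an ideal of `L` lying between `D` and `C`.
By minimality of `C/D` it equals `D` or `C`, and `M ∩ C = C` would give `M = M + C = L`.
-/

open LieAlgebra

section DerivedSeries

variable {R L : Type*} [CommRing R] [LieRing L] [LieAlgebra R L]

lemma LieIdeal.sup_lie_sup_self_le (J K : LieIdeal R L) : ⁅J ⊔ K, J ⊔ K⁆ ≤ J ⊔ ⁅K, K⁆ := by
  rw [LieSubmodule.sup_lie, LieSubmodule.lie_sup, LieSubmodule.lie_sup]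
  exact sup_le (sup_le (LieSubmodule.lie_le_left _ _ |>.trans le_sup_left)
      (LieSubmodule.lie_le_left _ _ |>.trans le_sup_left))
    (sup_le (LieSubmodule.lie_le_right _ _ |>.trans le_sup_left) le_sup_right)

lemma LieIdeal.le_sup_derivedSeriesOfIdeal {I J : LieIdeal R L} (h : I ≤ J ⊔ ⁅I, I⁆) (n : ℕ) :
    I ≤ J ⊔ derivedSeriesOfIdeal R L n I := by
  induction n with
  | zero => exact le_sup_right
  | succ n ih =>
    calc I ≤ J ⊔ ⁅I, I⁆ := h
      _ ≤ J ⊔ ⁅J ⊔ derivedSeriesOfIdeal R L n I, J ⊔ derivedSeriesOfIdeal R L n I⁆ :=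
        sup_le_sup_left (LieSubmodule.mono_lie ih ih) J
      _ ≤ J ⊔ (J ⊔ derivedSeriesOfIdeal R L (n + 1) I) := by
        rw [derivedSeriesOfIdeal_succ]
        exact sup_le_sup_left (sup_lie_sup_self_le _ _) J
      _ = J ⊔ derivedSeriesOfIdeal R L (n + 1) I := by rw [← sup_assoc, sup_idem]

lemma LieIdeal.le_of_le_sup_lie_self [IsSolvable L] {I J : LieIdeal R L} (h : I ≤ J ⊔ ⁅I, I⁆) :
    I ≤ J := by
  obtain ⟨k, hk⟩ := IsSolvable.solvable (R := R) (L := L)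
  have hIk : derivedSeriesOfIdeal R L k I = ⊥ :=
    eq_bot_iff.mpr (hk ▸ derivedSeriesOfIdeal_mono le_top k)
  simpa [hIk] using le_sup_derivedSeriesOfIdeal h k

end DerivedSeries

lemma IsChiefFactor.lie_le {F L : Type*} [Field F] [LieRing L] [LieAlgebra F L] [IsSolvable L]
    {C D : LieIdeal F L} (h : IsChiefFactor D C) : ⁅C, C⁆ ≤ D := by
  obtain ⟨hDC, hmin⟩ := h
  rcases hmin (D ⊔ ⁅C, C⁆) le_sup_left (sup_le hDC.le (LieSubmodule.lie_le_left C C)) with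
    hD | hC
  · exact hD ▸ le_sup_right
  · exact absurd (LieIdeal.le_of_le_sup_lie_self hC.ge) hDC.not_ge

section InfLieIdeal

variable {R L : Type*} [CommRing R] [LieRing L] [LieAlgebra R L]

def LieSubalgebra.infLieIdeal (M : LieSubalgebra R L) (C : LieIdeal R L)
    (hsup : M.toSubmodule ⊔ C.toSubmodule = ⊤) (hCC : ((⁅C, C⁆ : LieIdeal R L) : Set L) ⊆ M) :
    LieIdeal R L where
  toSubmodule := M.toSubmodule ⊓ C.toSubmodule
  lie_mem := by
    rintro x m ⟨hmM, hmC⟩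
    obtain ⟨a, haM, c, hcC, rfl⟩ := Submodule.mem_sup.mp (hsup ▸ Submodule.mem_top (x := x))
    rw [add_lie]
    have hcm : ⁅c, m⁆ ∈ ⁅C, C⁆ := LieSubmodule.lie_mem_lie hcC hmC
    exact Submodule.add_mem _ ⟨M.lie_mem haM hmM, C.lie_mem hmC⟩ ⟨hCC hcm, C.lie_mem hmC⟩

lemma LieSubalgebra.mem_infLieIdeal {M : LieSubalgebra R L} {C : LieIdeal R L}
    {hsup : M.toSubmodule ⊔ C.toSubmodule = ⊤} {hCC : ((⁅C, C⁆ : LieIdeal R L) : Set L) ⊆ M}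
    {x : L} : x ∈ M.infLieIdeal C hsup hCC ↔ x ∈ M ∧ x ∈ C :=
  Iff.rfl

end InfLieIdeal

theorem cSections_trivial_of_solvable_general {F : Type*} [Field F] {L : Type*} [LieRing L]
    [LieAlgebra F L] [LieAlgebra.IsSolvable L] :
    ∀ M : LieSubalgebra F L, IsMaximalSubalgebra M →
      ∀ C D : LieIdeal F L, IsChiefFactor D C → (D : Set L) ⊆ (M : Set L) →
        M.toSubmodule ⊔ C.toSubmodule = ⊤ → (M : Set L) ∩ (C : Set L) = (D : Set L) := by
  intro M hM C D hCD hDM hsup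
  have hDC : D ≤ C := hCD.1.le
  set N := M.infLieIdeal C hsup (fun _ hx ↦ hDM (hCD.lie_le hx))
  have hDN : D ≤ N := fun _ hx ↦ LieSubalgebra.mem_infLieIdeal.mpr ⟨hDM hx, hDC hx⟩
  rcases hCD.2 N hDN (fun _ hx ↦ (LieSubalgebra.mem_infLieIdeal.mp hx).2) with hND | hNC
  · ext x
    exact ⟨fun hx ↦ hND ▸ LieSubalgebra.mem_infLieIdeal.mpr hx, fun hx ↦ ⟨hDM hx, hDC hx⟩⟩
  · have hCM : C.toSubmodule ≤ M.toSubmodule :=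
      fun _ hx ↦ (LieSubalgebra.mem_infLieIdeal.mp (hNC ▸ hx : _ ∈ N)).1
    rw [sup_eq_left.mpr hCM, LieSubalgebra.toSubmodule_eq_top] at hsup
    exact absurd hsup hM.1

/-- In a finite-dimensional solvable Lie algebra every maximal subalgebra has trivial
c-section: if `C/D` is a chief factor with `D ⊆ M` and `L = M + C`, then `M ∩ C = D`. -/
theorem cSections_trivial_of_solvable {F : Type*} [Field F] {L : Type*} [LieRing L]
    [LieAlgebra F L] [FiniteDimensional F L] [LieAlgebra.IsSolvable L] :
    ∀ M : LieSubalgebra F L, IsMaximalSubalgebra M →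
      ∀ C D : LieIdeal F L, IsChiefFactor D C → (D : Set L) ⊆ (M : Set L) →
        M.toSubmodule ⊔ C.toSubmodule = ⊤ → (M : Set L) ∩ (C : Set L) = (D : Set L) :=
  cSections_trivial_of_solvable_general
end

section
/- Let L be a finite-dimensional Lie algebra over a field F of characteristic zero with Levi decomposition L = R ⋊ S, where R is the solvable radical. If every c-section of every maximal subalgebra of L is solvable, then every simple ideal S_j of the Levi factor S has the property that every proper subalgebra of S_j is solvable. -/
open LieAlgebra Function

section

variable {F : Type*} [Field F] {L : Type*} [LieRing L] [LieAlgebra F L]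
  {A : Type*} [LieRing A] [LieAlgebra F A]

theorem exists_isMaximalSubalgebra_le [FiniteDimensional F L] {U : LieSubalgebra F L}
    (hU : U ≠ ⊤) : ∃ M : LieSubalgebra F L, IsMaximalSubalgebra M ∧ U ≤ M :=
  (eq_top_or_exists_le_coatom U).resolve_left hU

def LieIdeal.mkQ (I : LieIdeal F L) : L →ₗ⁅F⁆ L ⧸ I :=
  { I.toSubmodule.mkQ with map_lie' := rfl }

theorem LieIdeal.surjective_mkQ (I : LieIdeal F L) : Surjective I.mkQ :=
  LieSubmodule.Quotient.surjective_mk' I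

theorem LieHom.exists_surjective_of_isCompl (g : A →ₗ⁅F⁆ L) (hg : Injective g)
    (I : LieIdeal F L) (h : IsCompl I.toSubmodule (LinearMap.range g.toLinearMap)) :
    ∃ r : L →ₗ⁅F⁆ A, Surjective r := by
  have hbij : Bijective (I.mkQ.comp g) :=
    (Submodule.quotientEquivOfIsCompl _ _ h).symm.bijective.comp
      (LinearEquiv.ofInjective g.toLinearMap hg).bijective
  exact ⟨(LieEquiv.ofBijective _ hbij).symm.toLieHom.comp I.mkQ,
    (LieEquiv.ofBijective _ hbij).symm.surjective.comp I.surjective_mkQ⟩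

theorem LieAlgebra.exists_surjective_lieHom_to_levi_ideal {S : LieSubalgebra F L}
    [IsSemisimple F S]
    (hsup : (radical F L).toSubmodule ⊔ S.toSubmodule = ⊤)
    (hinf : (radical F L).toSubmodule ⊓ S.toSubmodule = ⊥) (J : LieIdeal F S) :
    ∃ f : L →ₗ⁅F⁆ J, Surjective f := by
  obtain ⟨p, hp⟩ := S.incl.exists_surjective_of_isCompl Subtype.val_injective (radical F L)
    (by
      rw [← LieHom.range_toSubmodule, S.incl_range]
      exact ⟨disjoint_iff.2 hinf, codisjoint_iff.2 hsup⟩)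
  obtain ⟨q, hq⟩ := (J.incl : J →ₗ⁅F⁆ S).exists_surjective_of_isCompl Subtype.val_injective Jᶜ
    (by
      rw [← LieHom.range_toSubmodule, J.incl_range, LieIdeal.toLieSubalgebra_toSubmodule,
        LieSubmodule.isCompl_toSubmodule]
      exact isCompl_compl.symm)
  exact ⟨q.comp p, hq.comp hp⟩

theorem isChiefFactor_ker_top_of_surjective [IsSimple F A] {f : L →ₗ⁅F⁆ A} (hf : Surjective f) :
    IsChiefFactor f.ker ⊤ := by
  refine ⟨lt_top_iff_ne_top.2 fun htop => ?_, fun K hK _ => ?_⟩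
  · have := IsSimple.nontrivial F (L := A)
    obtain ⟨a, ha⟩ := exists_ne (0 : A)
    obtain ⟨x, rfl⟩ := hf a
    exact ha (f.mem_ker.1 (htop ▸ LieSubmodule.mem_top x))
  · rcases IsSimple.eq_bot_or_eq_top (K.map f) with hbot | htop
    · exact .inl (le_antisymm (LieIdeal.map_eq_bot_iff.1 hbot) hK)
    · have hcomap := LieIdeal.comap_map_eq (f := f) (I := K) (by
        rw [← LieSubmodule.coe_toSubmodule, LieIdeal.coe_map_of_surjective hf]; rfl)
      rw [htop, sup_eq_left.2 hK] at hcomap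
      rw [← hcomap]
      exact .inr (eq_top_iff.2 fun x _ => by simp)

theorem IsMaximalSubalgebra.comap {f : L →ₗ⁅F⁆ A} (hf : Surjective f)
    {M : LieSubalgebra F A} (hM : IsMaximalSubalgebra M) : IsMaximalSubalgebra (M.comap f) := by
  refine ⟨fun htop => hM.1 (eq_top_iff.2 fun a _ => ?_), fun K hK => ?_⟩
  · obtain ⟨x, rfl⟩ := hf a
    exact (htop ▸ LieSubalgebra.mem_top x : x ∈ M.comap f)
  · have hker : ∀ x, f x = 0 → x ∈ K := fun x hx => hK.le (by simp [hx])
    have hMK : M < K.map f := by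
      refine lt_of_le_of_ne (fun a ha => ?_) fun hMK => hK.not_ge fun x hx => ?_
      · obtain ⟨x, rfl⟩ := hf a
        exact ⟨x, hK.le ha, rfl⟩
      · show f x ∈ M
        rw [hMK]
        exact ⟨x, hx, rfl⟩
    refine eq_top_iff.2 fun x _ => ?_
    obtain ⟨k, hk, hkx⟩ := (hM.2 _ hMK).symm ▸ LieSubalgebra.mem_top (f x)
    simpa using K.add_mem hk (hker (x - k) (by simp [← hkx]))

theorem LieHom.isSolvable_of_surjective_of_le_ker (φ : L →ₗ⁅F⁆ A) (hφ : Surjective φ)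
    {I : LieIdeal F L} (hI : I ≤ φ.ker) [IsSolvable (L ⧸ I)] : IsSolvable A := by
  let ψ : L ⧸ I →ₗ⁅F⁆ A :=
    { I.toSubmodule.liftQ φ.toLinearMap hI with
      map_lie' := by rintro ⟨x⟩ ⟨y⟩; exact φ.map_lie x y }
  refine Surjective.lieAlgebra_isSolvable (f := ψ) fun a => ?_
  obtain ⟨x, rfl⟩ := hφ a
  exact ⟨Submodule.Quotient.mk x, rfl⟩

theorem isSolvable_of_isSolvable_subQuot_comap {f : L →ₗ⁅F⁆ A} (hf : Surjective f)
    {M : LieSubalgebra F A} [IsSolvable (SubQuot (M.comap f) f.ker)] : IsSolvable M := by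
  let φ : M.comap f →ₗ⁅F⁆ M :=
    { f.toLinearMap.restrict (p := (M.comap f).toSubmodule) (q := M.toSubmodule)
        fun _ hx => hx with
      map_lie' := Subtype.ext (f.map_lie _ _) }
  refine φ.isSolvable_of_surjective_of_le_ker (I := LieIdeal.comap (M.comap f).incl f.ker)
    (fun a => ?_) (fun x hx => ?_)
  · obtain ⟨x, hx⟩ := hf a
    exact ⟨⟨x, show f x ∈ M from hx ▸ a.2⟩, Subtype.ext hx⟩
  · exact Subtype.ext hx

end

theorem simple_levi_ideals_of_solvable_cSections_general {F : Type*} [Field F]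
    {L : Type*} [LieRing L] [LieAlgebra F L] [FiniteDimensional F L]
    (S : LieSubalgebra F L) [LieAlgebra.IsSemisimple F S]
    (hsup : (LieAlgebra.radical F L).toSubmodule ⊔ S.toSubmodule = ⊤)
    (hinf : (LieAlgebra.radical F L).toSubmodule ⊓ S.toSubmodule = ⊥)
    (h : ∀ M : LieSubalgebra F L, IsMaximalSubalgebra M →
      ∀ C D : LieIdeal F L, IsChiefFactor D C → (D : Set L) ⊆ (M : Set L) →
        M.toSubmodule ⊔ C.toSubmodule = ⊤ →
          LieAlgebra.IsSolvable (SubQuot (M ⊓ (C : LieSubalgebra F L)) D)) :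
    ∀ J : LieIdeal F S, LieAlgebra.IsSimple F J →
      ∀ U : LieSubalgebra F J, U ≠ ⊤ → LieAlgebra.IsSolvable U := by
  intro J _ U hU
  obtain ⟨f, hf⟩ := exists_surjective_lieHom_to_levi_ideal hsup hinf J
  obtain ⟨M, hM, hUM⟩ := exists_isMaximalSubalgebra_le hU
  have hcSection := h (M.comap f) (hM.comap hf) ⊤ f.ker (isChiefFactor_ker_top_of_surjective hf)
    (fun x hx => by simp [f.mem_ker.1 hx]) (by simp)
  rw [LieIdeal.top_toLieSubalgebra, inf_top_eq] at hcSection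
  have : IsSolvable M := isSolvable_of_isSolvable_subQuot_comap hf
  exact (LieSubalgebra.inclusion_injective hUM).lieAlgebra_isSolvable

/-- Characteristic zero: if every c-section of every maximal subalgebra of `L` is solvable,
then every simple ideal of a Levi factor `S` has all of its proper subalgebras solvable. -/
theorem simple_levi_ideals_of_solvable_cSections {F : Type*} [Field F] [CharZero F]
    {L : Type*} [LieRing L] [LieAlgebra F L] [FiniteDimensional F L]
    (S : LieSubalgebra F L) [LieAlgebra.IsSemisimple F S]
    (hsup : (LieAlgebra.radical F L).toSubmodule ⊔ S.toSubmodule = ⊤)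
    (hinf : (LieAlgebra.radical F L).toSubmodule ⊓ S.toSubmodule = ⊥)
    (h : ∀ M : LieSubalgebra F L, IsMaximalSubalgebra M →
      ∀ C D : LieIdeal F L, IsChiefFactor D C → (D : Set L) ⊆ (M : Set L) →
        M.toSubmodule ⊔ C.toSubmodule = ⊤ →
          LieAlgebra.IsSolvable (SubQuot (M ⊓ (C : LieSubalgebra F L)) D)) :
    ∀ J : LieIdeal F S, LieAlgebra.IsSimple F J →
      ∀ U : LieSubalgebra F J, U ≠ ⊤ → LieAlgebra.IsSolvable U :=
  simple_levi_ideals_of_solvable_cSections_general S hsup hinf h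
end

section
/- Let L be a finite-dimensional Lie algebra over a field F of characteristic zero such that L = R ⊕ S (vector space direct sum) where R is the solvable radical and S is a direct sum of simple ideals, each of which is either minimal non-abelian (every proper subalgebra is abelian) or isomorphic to sl₂(F). Then every c-section of every maximal subalgebra of L is solvable. -/
namespace LieAlgebra

variable {F : Type*} [Field F]

lemma exists_lie_mem_span_singleton_of_finrank_le_two {A : Type*} [LieRing A] [LieAlgebra F A]
    [FiniteDimensional F A] (h : Module.finrank F A ≤ 2) :
    ∃ v : A, ∀ x y : A, ⁅x, y⁆ ∈ F ∙ v := by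
  by_cases h1 : Module.finrank F A ≤ 1
  · obtain ⟨w, hw⟩ := finrank_le_one_iff.mp h1
    refine ⟨0, fun x y => ?_⟩
    obtain ⟨c, rfl⟩ := hw x
    obtain ⟨d, rfl⟩ := hw y
    simp
  · let b := Module.finBasisOfFinrankEq F A (show Module.finrank F A = 2 by omega)
    refine ⟨⁅b 0, b 1⁆, fun x y => ?_⟩
    rw [← b.sum_repr x, ← b.sum_repr y, Submodule.mem_span_singleton]
    refine ⟨b.repr x 0 * b.repr y 1 - b.repr x 1 * b.repr y 0, ?_⟩
    simp only [Fin.sum_univ_two, add_lie, lie_add, smul_lie, lie_smul, lie_self, ← lie_skew (b 1)]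
    module

lemma isSolvable_of_finrank_le_two {A : Type*} [LieRing A] [LieAlgebra F A]
    [FiniteDimensional F A] (h : Module.finrank F A ≤ 2) : IsSolvable A := by
  obtain ⟨v, hv⟩ := exists_lie_mem_span_singleton_of_finrank_le_two h
  have hD : (derivedSeries F A 1).toSubmodule ≤ F ∙ v := by
    rw [derivedSeries_def, derivedSeriesOfIdeal_succ, derivedSeriesOfIdeal_zero,
      LieSubmodule.lieIdeal_oper_eq_linear_span', Submodule.span_le]
    rintro - ⟨x, -, y, -, rfl⟩
    exact hv x y
  refine IsSolvable.mk (R := F) (k := 2) <|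
    (LieSubmodule.lie_eq_bot_iff _ _).mpr fun x hx y hy => ?_
  obtain ⟨s, rfl⟩ := Submodule.mem_span_singleton.mp (hD hx)
  obtain ⟨t, rfl⟩ := Submodule.mem_span_singleton.mp (hD hy)
  simp

lemma _root_.LieSubalgebra.isSolvable_of_ne_top_of_finrank_le_three {A : Type*} [LieRing A]
    [LieAlgebra F A] [FiniteDimensional F A] (h : Module.finrank F A ≤ 3)
    {U : LieSubalgebra F A} (hU : U ≠ ⊤) : IsSolvable U := by
  have hlt : U.toSubmodule ≠ ⊤ := by
    rwa [← LieSubalgebra.top_toSubmodule, Ne, LieSubalgebra.toSubmodule_inj]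
  have := Submodule.finrank_lt hlt
  exact isSolvable_of_finrank_le_two (by change Module.finrank F U.toSubmodule ≤ 2; omega)

lemma SpecialLinear.finrank_sl_lt {n : Type*} [DecidableEq n] [Fintype n] [Nonempty n] :
    Module.finrank F (SpecialLinear.sl n F) < Fintype.card n ^ 2 := by
  obtain ⟨i⟩ := ‹Nonempty n›
  have hne : LinearMap.ker (Matrix.traceLinearMap n F F) ≠ ⊤ := fun h => by
    have : Matrix.single i i (1 : F) ∈ LinearMap.ker (Matrix.traceLinearMap n F F) := h ▸ trivial
    simp at this
  have := Submodule.finrank_lt hne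
  rwa [Module.finrank_matrix, Module.finrank_self, mul_one, ← sq] at this

end LieAlgebra

lemma LieSubalgebra.isSolvable_of_ne_top_of_abelian_or_sl2 {F A : Type*} [Field F] [LieRing A]
    [LieAlgebra F A] (h : (∀ U : LieSubalgebra F A, U ≠ ⊤ → IsLieAbelian U) ∨
      Nonempty (A ≃ₗ⁅F⁆ LieAlgebra.SpecialLinear.sl (Fin 2) F))
    {U : LieSubalgebra F A} (hU : U ≠ ⊤) : LieAlgebra.IsSolvable U := by
  rcases h with hab | ⟨⟨e⟩⟩
  · have := hab U hU
    infer_instance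
  · have : FiniteDimensional F A := e.symm.toLinearEquiv.finiteDimensional
    refine isSolvable_of_ne_top_of_finrank_le_three ?_ hU
    have := LieAlgebra.SpecialLinear.finrank_sl_lt (F := F) (n := Fin 2)
    rw [e.toLinearEquiv.finrank_eq]
    simp only [Fintype.card_fin] at this
    omega

lemma LieSubalgebra.isSolvable_of_le {R L : Type*} [CommRing R] [LieRing L] [LieAlgebra R L]
    {U V : LieSubalgebra R L} (h : U ≤ V) [LieAlgebra.IsSolvable V] : LieAlgebra.IsSolvable U :=
  (LieSubalgebra.inclusion_injective h).lieAlgebra_isSolvable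

def LieIdeal.quotientMk {R L : Type*} [CommRing R] [LieRing L] [LieAlgebra R L]
    (I : LieIdeal R L) : L →ₗ⁅R⁆ L ⧸ I where
  toLinearMap := (LieSubmodule.Quotient.mk' I : L →ₗ[R] L ⧸ I)
  map_lie' := rfl

@[simp]
lemma LieIdeal.quotientMk_eq_zero_iff {R L : Type*} [CommRing R] [LieRing L] [LieAlgebra R L]
    {I : LieIdeal R L} {x : L} : I.quotientMk x = 0 ↔ x ∈ I :=
  LieSubmodule.Quotient.mk_eq_zero'

lemma LieIdeal.le_ker_sup_of_map_le_map {R L L' : Type*} [CommRing R] [LieRing L]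
    [LieAlgebra R L] [LieRing L'] [LieAlgebra R L'] {f : L →ₗ⁅R⁆ L'}
    (hf : Function.Surjective f) {I I' : LieIdeal R L} (h : I.map f ≤ I'.map f) :
    I ≤ f.ker ⊔ I' := by
  intro x hx
  obtain ⟨y, hy⟩ := LieIdeal.mem_map_of_surjective hf (h (LieIdeal.mem_map hx))
  have hker : x - y ∈ f.ker := by rw [LieHom.mem_ker, map_sub, hy, sub_self]
  rw [← sub_add_cancel x y]
  exact (LieSubmodule.mem_sup _ _ _).mpr ⟨_, hker, y, y.2, rfl⟩

namespace LieSubalgebra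

variable {R A : Type*} [CommRing R] [LieRing A] [LieAlgebra R A]

noncomputable def projectionOnto (B : LieSubalgebra R A) (T : LieIdeal R A)
    (h : IsCompl B.toSubmodule T.toSubmodule) : A →ₗ⁅R⁆ B where
  toLinearMap := B.toSubmodule.projectionOnto T.toSubmodule h
  map_lie' {x y} := by
    let π : A →ₗ[R] B := B.toSubmodule.projectionOnto T.toSubmodule h
    change π ⁅x, y⁆ = ⁅π x, π y⁆
    have hT (z : A) : z - π z ∈ T := by
      rw [← LieSubmodule.mem_toSubmodule, ← Submodule.projectionOnto_apply_eq_zero_iff h, map_sub,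
        Submodule.projectionOnto_apply_left, sub_self]
    have hxy : ⁅x, y⁆ - ⁅(π x : A), (π y : A)⁆ ∈ T := by
      convert add_mem (lie_mem_left R A T _ y (hT x)) (lie_mem_right R A T (π x : A) _ (hT y))
        using 1
      simp only [sub_lie, lie_sub]
      abel
    rw [← sub_eq_zero, ← Submodule.projectionOnto_apply_left h ⁅π x, π y⁆, ← map_sub,
      Submodule.projectionOnto_apply_eq_zero_iff h]
    exact hxy

variable {B : LieSubalgebra R A} {T : LieIdeal R A} (h : IsCompl B.toSubmodule T.toSubmodule)

@[simp]
lemma projectionOnto_apply_of_mem {x : A} (hx : x ∈ B) : (B.projectionOnto T h x : A) = x :=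
  congrArg Subtype.val (Submodule.projectionOnto_apply_left h ⟨x, hx⟩)

lemma ker_projectionOnto : (B.projectionOnto T h).ker = T := by
  ext x
  exact Submodule.projectionOnto_apply_eq_zero_iff h

end LieSubalgebra

lemma iSupIndep.isCompl_iSup_ne {α ι : Type*} [CompleteLattice α] {t : ι → α}
    (ht : iSupIndep t) (htop : ⨆ i, t i = ⊤) (i : ι) : IsCompl (t i) (⨆ (j) (_ : j ≠ i), t j) :=
  ⟨ht i, codisjoint_iff.mpr (by rw [← iSup_split_single, htop])⟩

namespace iSupIndep

variable {R A : Type*} [CommRing R] [LieRing A] [LieAlgebra R A]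
variable {ι : Type*} {J : ι → LieIdeal R A} (hind : iSupIndep J) (htop : ⨆ i, J i = ⊤)

noncomputable def lieProj (i : ι) : A →ₗ⁅R⁆ J i :=
  (J i : LieSubalgebra R A).projectionOnto (⨆ (j) (_ : j ≠ i), J j)
    (LieSubmodule.isCompl_toSubmodule.mpr (hind.isCompl_iSup_ne htop i))

variable {hind htop}

lemma lieProj_apply_of_mem {i : ι} {x : A} (hx : x ∈ J i) : (hind.lieProj htop i x : A) = x :=
  LieSubalgebra.projectionOnto_apply_of_mem _ hx

lemma ker_lieProj (i : ι) : (hind.lieProj htop i).ker = ⨆ (j) (_ : j ≠ i), J j :=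
  LieSubalgebra.ker_projectionOnto _

lemma lieProj_eq_zero_of_mem_of_ne {i j : ι} {x : A} (hx : x ∈ J j) (hji : j ≠ i) :
    hind.lieProj htop i x = 0 := by
  rw [← LieHom.mem_ker, ker_lieProj]
  exact (le_iSup₂_of_le j hji le_rfl : J j ≤ _) hx

lemma sum_lieProj [Fintype ι] (x : A) : ∑ i, (hind.lieProj htop i x : A) = x := by
  have hx : x ∈ ⨆ i, (J i).toSubmodule := by
    rw [← LieSubmodule.iSup_toSubmodule, htop]
    exact Submodule.mem_top
  refine Submodule.iSup_induction _ (motive := fun x => ∑ i, (hind.lieProj htop i x : A) = x) hx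
    (fun j y hy => ?_) (by simp) (fun y z hy hz => by simp [Finset.sum_add_distrib, hy, hz])
  rw [Finset.sum_eq_single j (fun i _ hij => by rw [lieProj_eq_zero_of_mem_of_ne hy hij.symm]; rfl)
    (by simp), lieProj_apply_of_mem hy]

lemma le_or_le_ker_lieProj (i : ι) [LieAlgebra.IsSimple R (J i)] (I : LieIdeal R A) :
    J i ≤ I ∨ I ≤ (hind.lieProj htop i).ker := by
  refine (LieAlgebra.IsSimple.eq_bot_or_eq_top (LieIdeal.comap (J i).incl I)).symm.imp
    LieIdeal.comap_incl_eq_top.mp fun hbot x hx => ?_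
  have hdisj : Disjoint (J i) I := LieIdeal.comap_incl_eq_bot.mp hbot
  have hcen : hind.lieProj htop i x ∈ LieAlgebra.center R (J i) := by
    refine (LieModule.mem_maxTrivSubmodule R (J i) (J i) _).mpr fun y => ?_
    have hyx : ⁅(y : A), x⁆ = 0 := by
      rw [← LieSubmodule.mem_bot (R := R) (L := A), ← hdisj.eq_bot]
      exact ⟨lie_mem_left R A (J i) _ x y.2, lie_mem_right R A I _ x hx⟩
    have hy : hind.lieProj htop i y = y := Subtype.ext (lieProj_apply_of_mem y.2)
    rw [← hy, ← LieHom.map_lie, hyx, map_zero]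
  rw [LieAlgebra.center_eq_bot, LieSubmodule.mem_bot] at hcen
  exact LieHom.mem_ker.mpr hcen

variable (hind htop) in
lemma exists_le_ker_lieProj [Fintype ι] (hsimple : ∀ i, LieAlgebra.IsSimple R (J i))
    {I I' : LieIdeal R A} (h : ¬ I ≤ I') :
    ∃ i, I' ≤ (hind.lieProj htop i).ker ∧ ¬ I ≤ (hind.lieProj htop i).ker := by
  by_contra! hcon
  refine h fun x hx => ?_
  rw [← sum_lieProj (hind := hind) (htop := htop) x]
  refine sum_mem fun i _ => ?_
  have := hsimple i
  rcases le_or_le_ker_lieProj (hind := hind) (htop := htop) i I' with hJ | hI'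
  · exact hJ (hind.lieProj htop i x).2
  · rw [LieHom.mem_ker.mp (hcon i hI' hx), ZeroMemClass.coe_zero]
    exact zero_mem I'

end iSupIndep

section CSection

variable {F L K : Type*} [Field F] [LieRing L] [LieAlgebra F L] [LieRing K] [LieAlgebra F K]

lemma isSolvable_subQuot_of_lieHom (f : L →ₗ⁅F⁆ K) {N : LieSubalgebra F L} {D : LieIdeal F L}
    (hker : ∀ x ∈ N, f x = 0 ↔ x ∈ D) [LieAlgebra.IsSolvable (f.comp N.incl).range] :
    LieAlgebra.IsSolvable (SubQuot N D) := by
  have hD : (f.comp N.incl).ker = LieIdeal.comap N.incl D := by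
    ext x
    exact hker x x.2
  change LieAlgebra.IsSolvable (N ⧸ LieIdeal.comap N.incl D)
  rw [← hD]
  exact (LieAlgebra.solvable_iff_equiv_solvable (f.comp N.incl).quotKerEquivRange).mpr
    inferInstance

lemma isSolvable_subQuot_of_le_sup {I D : LieIdeal F L} [LieAlgebra.IsSolvable I]
    {N : LieSubalgebra F L} (hN : N.toSubmodule ≤ (I ⊔ D).toSubmodule) :
    LieAlgebra.IsSolvable (SubQuot N D) := by
  let f := D.quotientMk
  have hle : (f.comp N.incl).range ≤ (f.comp I.incl).range := by
    rintro - ⟨⟨x, hx⟩, rfl⟩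
    obtain ⟨r, hr, d, hd, rfl⟩ := (LieSubmodule.mem_sup _ _ _).mp (hN hx)
    refine ⟨⟨r, hr⟩, ?_⟩
    change f r = f (r + d)
    rw [map_add, LieIdeal.quotientMk_eq_zero_iff.mpr hd, add_zero]
  have := LieSubalgebra.isSolvable_of_le hle
  exact isSolvable_subQuot_of_lieHom f fun x _ => LieIdeal.quotientMk_eq_zero_iff

lemma IsChiefFactor.ker_inf_eq {C D : LieIdeal F L} (hCD : IsChiefFactor D C)
    (f : L →ₗ⁅F⁆ K) (hD : D ≤ f.ker) (hC : ¬ C ≤ f.ker) : f.ker ⊓ C = D :=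
  ((hCD.2 _ (le_inf hD hCD.1.le) inf_le_right).resolve_right fun h => hC (h ▸ inf_le_left))

lemma range_comp_incl_inf_ne_top (f : L →ₗ⁅F⁆ K) {M : LieSubalgebra F L} {C D : LieIdeal F L}
    (hker : ∀ x ∈ C, f x = 0 → x ∈ D) (hDM : (D : Set L) ⊆ M) (hCM : ¬ (C : Set L) ⊆ M) :
    (f.comp (M ⊓ (C : LieSubalgebra F L)).incl).range ≠ ⊤ := by
  intro htop
  refine hCM fun c hc => ?_
  obtain ⟨⟨x, hxM, hxC⟩, hfx⟩ := ((f.comp _).mem_range _).mp (htop ▸ LieSubalgebra.mem_top (f c))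
  have hcx : c - x ∈ D := hker _ (sub_mem hc hxC) (by rw [map_sub, sub_eq_zero]; exact hfx.symm)
  rw [← sub_add_cancel c x]
  exact M.add_mem (hDM hcx) hxM

lemma isSolvable_cSection_of_lieHom {M : LieSubalgebra F L} {C D : LieIdeal F L}
    (hCD : IsChiefFactor D C) (hDM : (D : Set L) ⊆ M) (hCM : ¬ (C : Set L) ⊆ M)
    (f : L →ₗ⁅F⁆ K) (hD : D ≤ f.ker) (hC : ¬ C ≤ f.ker)
    (hK : ∀ U : LieSubalgebra F K, U ≠ ⊤ → LieAlgebra.IsSolvable U) :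
    LieAlgebra.IsSolvable (SubQuot (M ⊓ (C : LieSubalgebra F L)) D) := by
  have hker (x : L) (hx : x ∈ C) : f x = 0 ↔ x ∈ D := by
    rw [← LieHom.mem_ker, ← hCD.ker_inf_eq f hD hC, LieSubmodule.mem_inf, and_iff_left hx]
  have := hK _ (range_comp_incl_inf_ne_top f (fun x hx => (hker x hx).mp) hDM hCM)
  exact isSolvable_subQuot_of_lieHom f fun x hx => hker x hx.2

end CSection

theorem cSections_solvable_of_structure_general {F : Type*} [Field F]
    {L : Type*} [LieRing L] [LieAlgebra F L] [FiniteDimensional F L]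
    (S : LieSubalgebra F L)
    (hsup : (LieAlgebra.radical F L).toSubmodule ⊔ S.toSubmodule = ⊤)
    (hinf : (LieAlgebra.radical F L).toSubmodule ⊓ S.toSubmodule = ⊥)
    (n : ℕ) (J : Fin n → LieIdeal F S)
    (hind : iSupIndep J) (hJsup : (⨆ i, J i) = ⊤)
    (hsimple : ∀ i, LieAlgebra.IsSimple F (J i))
    (hprop : ∀ i, (∀ U : LieSubalgebra F (J i), U ≠ ⊤ → IsLieAbelian U) ∨
      Nonempty ((J i) ≃ₗ⁅F⁆ LieAlgebra.SpecialLinear.sl (Fin 2) F)) :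
    ∀ M : LieSubalgebra F L, IsMaximalSubalgebra M →
      ∀ C D : LieIdeal F L, IsChiefFactor D C → (D : Set L) ⊆ (M : Set L) →
        M.toSubmodule ⊔ C.toSubmodule = ⊤ →
          LieAlgebra.IsSolvable (SubQuot (M ⊓ (C : LieSubalgebra F L)) D) := by
  intro M hM C D hCD hDM hMC
  have hCM : ¬ (C : Set L) ⊆ M := fun h => hM.1 <| LieSubalgebra.toSubmodule_injective <| by
    rw [LieSubalgebra.top_toSubmodule, ← hMC, sup_eq_left.mpr fun x hx => h hx]
  by_cases hCR : C ≤ LieAlgebra.radical F L ⊔ D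
  · exact isSolvable_subQuot_of_le_sup (inf_le_right.trans hCR)
  let p := S.projectionOnto (LieAlgebra.radical F L) (IsCompl.of_eq hinf hsup).symm
  have hp : Function.Surjective p := fun u => ⟨u, Subtype.ext (S.projectionOnto_apply_of_mem _ u.2)⟩
  have hpC : ¬ C.map p ≤ D.map p := fun h => hCR <| by
    simpa [p, LieSubalgebra.ker_projectionOnto] using LieIdeal.le_ker_sup_of_map_le_map hp h
  obtain ⟨i, hDi, hCi⟩ := hind.exists_le_ker_lieProj hJsup hsimple hpC
  refine isSolvable_cSection_of_lieHom hCD hDM hCM ((hind.lieProj hJsup i).comp p) ?_ ?_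
    fun U hU => LieSubalgebra.isSolvable_of_ne_top_of_abelian_or_sl2 (hprop i) hU
  · exact fun x hx => hDi (LieIdeal.mem_map hx)
  · exact fun h => hCi (LieIdeal.map_le_iff_le_comap.mpr fun x hx => h hx)

/-- Characteristic zero: if `L = R ∔ S` where `R` is the radical and `S` is a direct sum of
simple ideals, each minimal non-abelian or isomorphic to `sl₂(F)`, then every c-section of
every maximal subalgebra of `L` is solvable. -/
theorem cSections_solvable_of_structure {F : Type*} [Field F] [CharZero F]
    {L : Type*} [LieRing L] [LieAlgebra F L] [FiniteDimensional F L]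
    (S : LieSubalgebra F L)
    (hsup : (LieAlgebra.radical F L).toSubmodule ⊔ S.toSubmodule = ⊤)
    (hinf : (LieAlgebra.radical F L).toSubmodule ⊓ S.toSubmodule = ⊥)
    (n : ℕ) (J : Fin n → LieIdeal F S)
    (hind : iSupIndep J) (hJsup : (⨆ i, J i) = ⊤)
    (hsimple : ∀ i, LieAlgebra.IsSimple F (J i))
    (hprop : ∀ i, (∀ U : LieSubalgebra F (J i), U ≠ ⊤ → IsLieAbelian U) ∨
      Nonempty ((J i) ≃ₗ⁅F⁆ LieAlgebra.SpecialLinear.sl (Fin 2) F)) :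
    ∀ M : LieSubalgebra F L, IsMaximalSubalgebra M →
      ∀ C D : LieIdeal F L, IsChiefFactor D C → (D : Set L) ⊆ (M : Set L) →
        M.toSubmodule ⊔ C.toSubmodule = ⊤ →
          LieAlgebra.IsSolvable (SubQuot (M ⊓ (C : LieSubalgebra F L)) D) :=
  cSections_solvable_of_structure_general S hsup hinf n J hind hJsup hsimple hprop
end

section
/- Let L = S ⊕ T be a direct sum of two isomorphic simple Lie algebras, with θ: S → T an isomorphism. Then the diagonal subalgebra D = {s + θ(s) : s ∈ S} is a maximal subalgebra of L. -/
section Prod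

variable {F : Type*} [Field F] {S T : Type*} [LieRing S] [LieRing T]
  [LieAlgebra F S] [LieAlgebra F T]

/-- Componentwise bracket on the direct sum `S ⊕ T`. -/
instance Prod.instLieRingBracket : Bracket (S × T) (S × T) :=
  ⟨fun p q => (⁅p.1, q.1⁆, ⁅p.2, q.2⁆)⟩

@[simp] lemma Prod.bracket_fst (p q : S × T) : ⁅p, q⁆.1 = ⁅p.1, q.1⁆ := rfl
@[simp] lemma Prod.bracket_snd (p q : S × T) : ⁅p, q⁆.2 = ⁅p.2, q.2⁆ := rfl

/-- The direct sum of two Lie rings. -/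
instance Prod.instLieRing : LieRing (S × T) where
  add_lie x y z := by ext <;> simp
  lie_add x y z := by ext <;> simp
  lie_self x := by ext <;> simp
  leibniz_lie x y z := by ext <;> simp

/-- The direct sum of two Lie algebras. -/
instance Prod.instLieAlgebra : LieAlgebra F (S × T) where
  lie_smul t x y := by ext <;> simp

end Prod

/-- The diagonal subalgebra `{(s, θ s) : s ∈ S}` of the direct sum of two isomorphic simple
Lie algebras is a maximal subalgebra. -/
theorem diagonal_isMaximal {F : Type*} [Field F] {S T : Type*} [LieRing S] [LieRing T]
    [LieAlgebra F S] [LieAlgebra F T] [FiniteDimensional F S] [FiniteDimensional F T]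
    [LieAlgebra.IsSimple F S] [LieAlgebra.IsSimple F T] (θ : S ≃ₗ⁅F⁆ T)
    (Dsub : LieSubalgebra F (S × T))
    (hD : (Dsub : Set (S × T)) = {p : S × T | p.2 = θ p.1}) :
    IsMaximalSubalgebra Dsub := by
  have hmem : ∀ p : S × T, p ∈ Dsub ↔ p.2 = θ p.1 := by
    intro p
    rw [← SetLike.mem_coe, hD]; rfl
  have hS : Nontrivial S := by
    rcases subsingleton_or_nontrivial S with h | h
    · exact absurd ⟨fun x y => Subsingleton.elim _ _⟩ (LieAlgebra.IsSimple.non_abelian F (L := S))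
    · exact h
  constructor
  · intro htop
    obtain ⟨x, hx⟩ := exists_ne (0 : S)
    have : ((x, 0) : S × T) ∈ Dsub := htop ▸ trivial
    rw [hmem] at this
    exact hx (θ.injective (by simpa using this.symm))
  · intro K hK
    -- find an element of K not in Dsub
    obtain ⟨p, hpK, hpD⟩ := SetLike.exists_of_lt hK
    have hle : Dsub ≤ K := le_of_lt hK
    -- (0, p.2 - θ p.1) ∈ K, nonzero second coord
    have hdiag : ∀ s : S, ((s, θ s) : S × T) ∈ K := fun s => hle ((hmem (s, θ s)).2 rfl)
    have h0 : ((0, p.2 - θ p.1) : S × T) ∈ K := by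
      have h := K.sub_mem hpK (hdiag p.1)
      have he : p - ((p.1, θ p.1) : S × T) = (0, p.2 - θ p.1) := by ext <;> simp
      rwa [he] at h
    have hne : p.2 - θ p.1 ≠ 0 := sub_ne_zero.2 (fun h => hpD ((hmem p).2 h))
    -- the set of t with (0,t) ∈ K is an ideal of T
    let I : LieIdeal F T :=
      { carrier := {t : T | ((0, t) : S × T) ∈ K}
        add_mem' := fun {a b} ha hb => by
          have := K.add_mem ha hb
          simpa using this
        zero_mem' := K.zero_mem
        smul_mem' := fun c {t} ht => by
          have := K.smul_mem c ht
          simpa using this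
        lie_mem := fun {x t} ht => by
          have h := K.lie_mem (hdiag (θ.symm x)) ht
          have he : (⁅((θ.symm x, θ (θ.symm x)) : S × T), ((0 : S), t)⁆) = ((0 : S), ⁅x, t⁆) := by
            ext <;> simp
          rwa [he] at h }
    have hIne : I ≠ ⊥ := by
      intro h
      have : p.2 - θ p.1 ∈ I := h0
      rw [h] at this
      exact hne this
    have hItop : I = ⊤ := (LieAlgebra.IsSimple.eq_bot_or_eq_top I).resolve_left hIne
    have hT : ∀ t : T, ((0, t) : S × T) ∈ K := by
      intro t
      have : t ∈ I := hItop ▸ trivial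
      exact this
    rw [eq_top_iff]
    rintro ⟨a, b⟩ -
    have h1 : ((a, θ a) : S × T) ∈ K := hdiag a
    have h2 : ((0, b - θ a) : S × T) ∈ K := hT _
    have := K.add_mem h1 h2
    simpa using this
end

section
/- Let L be a finite-dimensional Lie algebra, M a maximal subalgebra, A a minimal ideal of L with L = M + A, and C = M ∩ A ≠ 0. If M + N_A(C) = L, where N_A(C) is the normalizer of C in A, then C is an ideal of L, hence C = A and L = M, a contradiction; therefore N_A(C) = C, i.e., C is self-normalizing in A. -/
/-!
Put `C = M ∩ A`. Since `A` is an ideal, `M` normalizes `C`, so by maximality the normalizer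
`N_L(C)` is either `M` or `L`. In the first case `N_A(C) = N_L(C) ∩ A = M ∩ A = C`. In the
second `C` is a nonzero ideal of `L` inside the minimal ideal `A`, so `C = A` and again
`N_A(C) = C`.
-/

theorem IsMaximalSubalgebra.eq_or_eq_top_of_le {F L : Type*} [Field F] [LieRing L]
    [LieAlgebra F L] {M K : LieSubalgebra F L} (hM : IsMaximalSubalgebra M) (hK : M ≤ K) :
    K = M ∨ K = ⊤ :=
  (eq_or_lt_of_le hK).imp Eq.symm (hM.2 K)

namespace LieSubalgebra

variable {R L : Type*} [CommRing R] [LieRing L] [LieAlgebra R L]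

theorem le_normalizer_inf_lieIdeal (M : LieSubalgebra R L) (A : LieIdeal R L) :
    M ≤ (M ⊓ (A : LieSubalgebra R L)).normalizer := fun x hx =>
  (mem_normalizer_iff _ x).mpr fun _ hy => ⟨M.lie_mem hx hy.1, A.lie_mem hy.2⟩

theorem exists_lieIdeal_coe_eq_of_normalizer_eq_top {H : LieSubalgebra R L}
    (hH : H.normalizer = ⊤) : ∃ I : LieIdeal R L, (I : LieSubalgebra R L) = H :=
  H.exists_lieIdeal_coe_eq_iff.mpr fun x _ hy =>
    ideal_in_normalizer (hH ▸ mem_top x) hy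

theorem eq_of_normalizer_eq_top_of_le_isAtom {H : LieSubalgebra R L} {A : LieIdeal R L}
    (hA : IsAtom A) (hH : H.normalizer = ⊤) (hHA : H ≤ A) (hH0 : ∃ x ∈ H, x ≠ 0) :
    H = A := by
  obtain ⟨I, rfl⟩ := exists_lieIdeal_coe_eq_of_normalizer_eq_top hH
  have hI0 : I ≠ ⊥ := by
    obtain ⟨x, hx, hx0⟩ := hH0
    exact fun h => hx0 <| (LieSubmodule.mem_bot (R := R) (L := L) x).mp (h ▸ hx)
  exact congrArg _ ((hA.le_iff_eq hI0).mp fun x hx => hHA hx)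

end LieSubalgebra

theorem normalizer_in_minimal_ideal_eq_self_general {F : Type*} [Field F] {L : Type*} [LieRing L]
    [LieAlgebra F L] (M : LieSubalgebra F L)
    (hM : IsMaximalSubalgebra M) (A : LieIdeal F L) (hA : IsAtom A)
    (hC : ∃ x : L, x ∈ (M : Set L) ∩ (A : Set L) ∧ x ≠ 0) :
    {x : L | x ∈ A ∧ ∀ c ∈ (M : Set L) ∩ (A : Set L), ⁅x, c⁆ ∈ (M : Set L) ∩ (A : Set L)} =
      (M : Set L) ∩ (A : Set L) := by
  have hset : {x : L | x ∈ A ∧ ∀ c ∈ (M : Set L) ∩ (A : Set L),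
      ⁅x, c⁆ ∈ (M : Set L) ∩ (A : Set L)} =
      (((M ⊓ A).normalizer ⊓ A : LieSubalgebra F L) : Set L) := by
    ext x
    simp [LieSubalgebra.mem_normalizer_iff, and_comm]
  rw [hset, show (M : Set L) ∩ A = (M ⊓ A : LieSubalgebra F L) from rfl, SetLike.coe_set_eq]
  refine le_antisymm ?_ (le_inf (LieSubalgebra.le_normalizer _) inf_le_right)
  rcases hM.eq_or_eq_top_of_le (M.le_normalizer_inf_lieIdeal A) with hN | hN
  · rw [hN]
  · calc _ ≤ (A : LieSubalgebra F L) := inf_le_right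
      _ = M ⊓ A :=
        (LieSubalgebra.eq_of_normalizer_eq_top_of_le_isAtom hA hN inf_le_right hC).symm

/-- Let `M` be maximal in `L`, `A` a minimal ideal with `L = M + A`, and
`C = M ∩ A ≠ 0`. Then `C` is self-normalizing in `A`: `N_A(C) = C`. -/
theorem normalizer_in_minimal_ideal_eq_self {F : Type*} [Field F] {L : Type*} [LieRing L]
    [LieAlgebra F L] [FiniteDimensional F L] (M : LieSubalgebra F L)
    (hM : IsMaximalSubalgebra M) (A : LieIdeal F L) (hA : IsAtom A)
    (hsup : M.toSubmodule ⊔ A.toSubmodule = ⊤)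
    (hC : ∃ x : L, x ∈ (M : Set L) ∩ (A : Set L) ∧ x ≠ 0) :
    {x : L | x ∈ A ∧ ∀ c ∈ (M : Set L) ∩ (A : Set L), ⁅x, c⁆ ∈ (M : Set L) ∩ (A : Set L)} =
      (M : Set L) ∩ (A : Set L) :=
  normalizer_in_minimal_ideal_eq_self_general M hM A hA hC
end
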